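/- arXiv:2405.09525 — 2 statements merged into one kernel-verified Lean document; each statement's English description precedes it below -/
import Mathlib

section
/- Fix a partition λ of n and a standard basis vector |e⟩ = |e₁,…,e_n⟩ of (ℂ^d)^⊗n with weight vector w = 𝒲(|e⟩) (so w_i counts the indices j with e_j = i). If w is not majorized by λ, i.e., there exists m such that the sum of the m largest entries of w strictly exceeds λ₁ + ⋯ + λ_m, then Y_λ |e⟩ = 0, where Y_λ is the Young symmetrizer. -/
open Matrix
open scoped Kronecker ENNReal

noncomputable section

def permOp (d n : ℕ) (π : Equiv.Perm (Fin n)) :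
    Matrix (Fin n → Fin d) (Fin n → Fin d) ℂ :=
  Matrix.of fun x y => if y = x ∘ π then 1 else 0

def rowSum (lam : ℕ → ℕ) (r : ℕ) : ℕ := ∑ i ∈ Finset.range r, lam i

def rowOf (lam : ℕ → ℕ) (j : ℕ) : ℕ :=
  Nat.findGreatest (fun r => rowSum lam r ≤ j) j

def colOf (lam : ℕ → ℕ) (j : ℕ) : ℕ := j - rowSum lam (rowOf lam j)

def rowStab (lam : ℕ → ℕ) (n : ℕ) : Finset (Equiv.Perm (Fin n)) :=
  Finset.univ.filter fun π => ∀ j : Fin n, rowOf lam (π j : ℕ) = rowOf lam (j : ℕ)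

def colStab (lam : ℕ → ℕ) (n : ℕ) : Finset (Equiv.Perm (Fin n)) :=
  Finset.univ.filter fun π => ∀ j : Fin n, colOf lam (π j : ℕ) = colOf lam (j : ℕ)

def colSign (d n : ℕ) (lam : ℕ → ℕ) : Matrix (Fin n → Fin d) (Fin n → Fin d) ℂ :=
  ∑ b ∈ colStab lam n, ((Equiv.Perm.sign b : ℤ) : ℂ) • permOp d n b

def youngSym (d n : ℕ) (lam : ℕ → ℕ) : Matrix (Fin n → Fin d) (Fin n → Fin d) ℂ :=
  (∑ a ∈ rowStab lam n, permOp d n a) * colSign d n lam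

def weight (d n : ℕ) (e : Fin n → Fin d) : Fin d → ℕ :=
  fun i => (Finset.univ.filter fun j => e j = i).card

def tpow (d n : ℕ) (U : Matrix (Fin d) (Fin d) ℂ) :
    Matrix (Fin n → Fin d) (Fin n → Fin d) ℂ :=
  Matrix.of fun x y => ∏ i, U (x i) (y i)

section Aux

variable (lam : ℕ → ℕ)

lemma rowSum_succ (r : ℕ) : rowSum lam (r + 1) = rowSum lam r + lam r :=
  Finset.sum_range_succ lam r

lemma rowSum_mono : Monotone (rowSum lam) := fun a b hab =>
  Finset.sum_le_sum_of_subset (Finset.range_subset_range.2 hab)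

variable {lam} {n : ℕ} (hanti : Antitone lam) (hzero : ∀ i, n ≤ i → lam i = 0)
  (hsum : rowSum lam n = n)

include hanti hzero hsum in
lemma lam_le_n (r : ℕ) : lam r ≤ n := by
  rcases Nat.eq_zero_or_pos n with h0 | h0
  · have := hzero r (by omega); omega
  · calc lam r ≤ lam 0 := hanti (Nat.zero_le r)
      _ ≤ rowSum lam n := Finset.single_le_sum (fun i _ => Nat.zero_le _)
          (Finset.mem_range.2 h0)
      _ = n := hsum

lemma rowSum_rowOf_le (j : ℕ) : rowSum lam (rowOf lam j) ≤ j :=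
  Nat.findGreatest_spec (P := fun r => rowSum lam r ≤ j) (Nat.zero_le j) (by simp [rowSum])

include hanti hsum in
lemma lt_rowSum_rowOf_succ {j : ℕ} (hj : j < n) :
    j < rowSum lam (rowOf lam j + 1) := by
  by_contra h
  push_neg at h
  -- first: rowSum lam (j+1) ≤ j leads to contradiction
  have key : ¬ rowSum lam (j + 1) ≤ j := by
    intro hle
    -- some lam i = 0 for i ≤ j
    have hex : ∃ i, i ≤ j ∧ lam i = 0 := by
      by_contra hall
      push_neg at hall
      have : j + 1 ≤ rowSum lam (j + 1) := by
        have := Finset.sum_le_sum (s := Finset.range (j + 1))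
          (f := fun _ => 1) (g := lam) (fun i hi => by
            show 1 ≤ lam i
            have := hall i (Nat.lt_succ_iff.mp (Finset.mem_range.mp hi))
            omega)
        simpa [rowSum] using this
      omega
    obtain ⟨i, hij, hi0⟩ := hex
    have hn : rowSum lam n ≤ rowSum lam i + 0 := by
      have : rowSum lam n = rowSum lam i + ∑ k ∈ Finset.Ico i n, lam k := by
        rw [rowSum, rowSum, ← Finset.sum_range_add_sum_Ico lam (le_of_lt (lt_of_le_of_lt hij hj))]
      rw [this]
      have : ∑ k ∈ Finset.Ico i n, lam k = 0 := by
        apply Finset.sum_eq_zero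
        intro k hk
        have : lam k ≤ lam i := hanti (Finset.mem_Ico.mp hk).1
        omega
      omega
    have : rowSum lam i ≤ rowSum lam (j + 1) := rowSum_mono lam (by omega)
    omega
  rcases le_or_gt (rowOf lam j + 1) j with hle | hlt
  · exact Nat.findGreatest_is_greatest (P := fun r => rowSum lam r ≤ j)
      (Nat.lt_succ_self _) hle h
  · have h1 : rowOf lam j ≤ j := Nat.findGreatest_le j
    have h2 : rowOf lam j = j := by omega
    rw [h2] at h
    exact key h

include hanti hsum in
lemma colOf_lt_lam {j : ℕ} (hj : j < n) : colOf lam j < lam (rowOf lam j) := by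
  have h1 := rowSum_rowOf_le (lam := lam) j
  have h2 := lt_rowSum_rowOf_succ hanti hsum hj
  rw [rowSum_succ] at h2
  unfold colOf
  omega

lemma eq_of_rowOf_colOf {j k : ℕ} (hr : rowOf lam j = rowOf lam k)
    (hc : colOf lam j = colOf lam k) : j = k := by
  have h1 := rowSum_rowOf_le (lam := lam) j
  have h2 := rowSum_rowOf_le (lam := lam) k
  unfold colOf at hc
  rw [hr] at *
  omega

end Aux

/-- **Vanishing condition for the Young symmetrizer.** If the weight vector of a standard
basis vector `e` of `(ℂ^d)^⊗n` is not majorized by the partition `lam ⊢ n` (i.e. some `m`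
largest entries of the weight sum to more than `λ₁ + ⋯ + λₘ`), then `Y_λ |e⟩ = 0`. -/
theorem youngSym_mulVec_eq_zero_of_not_majorized (d n : ℕ) (lam : ℕ → ℕ)
    (hanti : Antitone lam) (hzero : ∀ i, n ≤ i → lam i = 0) (hsum : rowSum lam n = n)
    (e : Fin n → Fin d)
    (hmaj : ∃ m, ∃ S : Finset (Fin d), S.card = m ∧ rowSum lam m < ∑ i ∈ S, weight d n e i) :
    (youngSym d n lam).mulVec (Pi.single e 1) = 0 := by
  -- Step 1: there exist two distinct positions in the same column with equal entries of e.
  have hpair : ∃ j k : Fin n, j ≠ k ∧ colOf lam (j : ℕ) = colOf lam (k : ℕ) ∧ e j = e k := by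
    by_contra hpair
    push_neg at hpair
    obtain ⟨m, S, hScard, hlt⟩ := hmaj
    set T : Finset (Fin n) := Finset.univ.filter (fun j => e j ∈ S) with hT
    -- ∑ weights over S = card T
    have h1 : ∑ i ∈ S, weight d n e i = T.card := by
      rw [Finset.card_eq_sum_card_fiberwise (f := e) (s := T) (t := S)
        (fun x hx => (Finset.mem_filter.mp hx).2)]
      apply Finset.sum_congr rfl
      intro i hi
      unfold weight
      congr 1
      ext j
      simp only [hT, Finset.mem_filter, Finset.mem_univ, true_and]
      exact ⟨fun h => ⟨h ▸ hi, h⟩, fun h => h.2⟩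
    -- split T along columns
    have h2 : T.card = ∑ c ∈ Finset.range n,
        (T.filter (fun j : Fin n => colOf lam (j : ℕ) = c)).card := by
      apply Finset.card_eq_sum_card_fiberwise
      intro j _
      have : colOf lam (j : ℕ) ≤ (j : ℕ) := Nat.sub_le _ _
      exact Finset.mem_range.2 (lt_of_le_of_lt this j.2)
    -- per-column bound
    have h3 : ∀ c, (T.filter (fun j : Fin n => colOf lam (j : ℕ) = c)).card ≤
        ((Finset.range m).filter (fun r => c < lam r)).card := by
      intro c
      set Tc := T.filter (fun j : Fin n => colOf lam (j : ℕ) = c) with hTc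
      -- bound 1: card Tc ≤ m via e
      have hb1 : Tc.card ≤ m := by
        rw [← hScard]
        apply Finset.card_le_card_of_injOn e
        · intro j hj
          exact (Finset.mem_filter.mp (Finset.mem_filter.mp hj).1).2
        · intro j hj k hk hjk
          by_contra hne
          have hcj := (Finset.mem_filter.mp (Finset.mem_coe.mp hj)).2
          have hck := (Finset.mem_filter.mp (Finset.mem_coe.mp hk)).2
          exact hpair j k hne (hcj.trans hck.symm) hjk
      -- bound 2: card Tc ≤ card of rows r < n with c < lam r, via rowOf
      have hb2 : Tc.card ≤ ((Finset.range n).filter (fun r => c < lam r)).card := by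
        refine Finset.card_le_card_of_injOn (fun j : Fin n => rowOf lam (j : ℕ)) ?_ ?_
        · intro j hj
          have hcj := (Finset.mem_filter.mp hj).2
          refine Finset.mem_filter.2 ⟨Finset.mem_range.2 ?_, ?_⟩
          · exact lt_of_le_of_lt (Nat.findGreatest_le _) j.2
          · rw [← hcj]; exact colOf_lt_lam hanti hsum j.2
        · intro j hj k hk hjk
          have hcj := (Finset.mem_filter.mp (Finset.mem_coe.mp hj)).2
          have hck := (Finset.mem_filter.mp (Finset.mem_coe.mp hk)).2
          exact Fin.ext (eq_of_rowOf_colOf hjk (hcj.trans hck.symm))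
      -- combine: min m (card rows) ≤ card of filtered range m
      set L := ((Finset.range n).filter (fun r => c < lam r)).card with hL
      have hsub : Finset.range (min m L) ⊆ (Finset.range m).filter (fun r => c < lam r) := by
        intro r hr
        have hr' := Finset.mem_range.mp hr
        refine Finset.mem_filter.2 ⟨Finset.mem_range.2 (lt_of_lt_of_le hr' (min_le_left _ _)), ?_⟩
        by_contra hcl
        push_neg at hcl
        have : ((Finset.range n).filter (fun r => c < lam r)) ⊆ Finset.range r := by
          intro r' hr''
          have hcr' := (Finset.mem_filter.mp hr'').2
          rw [Finset.mem_range]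
          by_contra hge
          push_neg at hge
          have : lam r' ≤ lam r := hanti hge
          omega
        have := Finset.card_le_card this
        rw [Finset.card_range] at this
        have : min m L ≤ r := le_trans (min_le_right _ _) this
        omega
      have := Finset.card_le_card hsub
      rw [Finset.card_range] at this
      omega
    -- total: ∑ over columns of the row-count equals rowSum lam m
    have h4 : ∑ c ∈ Finset.range n,
        ((Finset.range m).filter (fun r => c < lam r)).card = rowSum lam m := by
      have : ∀ c, ((Finset.range m).filter (fun r => c < lam r)).card =
          ∑ r ∈ Finset.range m, if c < lam r then 1 else 0 :=
        fun c => Finset.card_filter _ _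
      simp only [this]
      rw [Finset.sum_comm]
      unfold rowSum
      apply Finset.sum_congr rfl
      intro r _
      have : ∑ c ∈ Finset.range n, (if c < lam r then 1 else 0) =
          ((Finset.range n).filter (fun c => c < lam r)).card :=
        (Finset.card_filter _ _).symm
      rw [this]
      have hfil : (Finset.range n).filter (fun c => c < lam r) = Finset.range (lam r) := by
        ext c
        simp only [Finset.mem_filter, Finset.mem_range]
        have := lam_le_n hanti hzero hsum r
        omega
      rw [hfil, Finset.card_range]
    have hle : T.card ≤ rowSum lam m := by
      rw [h2, ← h4]
      exact Finset.sum_le_sum fun c _ => h3 c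
    omega
  -- Step 2: the column antisymmetrizer kills |e⟩.
  obtain ⟨j, k, hjk, hcol, hek⟩ := hpair
  have hC : (colSign d n lam).mulVec (Pi.single e 1) = 0 := by
    funext x
    rw [Matrix.mulVec_single_one, Matrix.col_apply]
    simp only [mul_one, Pi.zero_apply]
    have hentry : (colSign d n lam) x e =
        ∑ b ∈ colStab lam n,
          ((Equiv.Perm.sign b : ℤ) : ℂ) * (if e = x ∘ b then 1 else 0) := by
      unfold colSign
      rw [Matrix.sum_apply]
      apply Finset.sum_congr rfl
      intro b _
      rw [Matrix.smul_apply]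
      rfl
    rw [hentry]
    set τ := Equiv.swap j k with hτ
    have hτcol : ∀ x : Fin n, colOf lam ((τ x : Fin n) : ℕ) = colOf lam (x : ℕ) := by
      intro y
      rcases eq_or_ne y j with rfl | hyj
      · rw [hτ, Equiv.swap_apply_left]; exact hcol.symm
      rcases eq_or_ne y k with rfl | hyk
      · rw [hτ, Equiv.swap_apply_right]; exact hcol
      · rw [hτ, Equiv.swap_apply_of_ne_of_ne hyj hyk]
    have heτ : e ∘ τ = e := by
      funext y
      rcases eq_or_ne y j with rfl | hyj
      · simp [hτ, Equiv.swap_apply_left, hek.symm]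
      rcases eq_or_ne y k with rfl | hyk
      · simp [hτ, Equiv.swap_apply_right, hek]
      · simp [hτ, Equiv.swap_apply_of_ne_of_ne hyj hyk]
    have hττ : (τ : Fin n → Fin n) ∘ τ = id := by
      funext y; simp [hτ, Equiv.swap_apply_self]
    refine Finset.sum_involution (fun b _ => b * τ) ?_ ?_ ?_ ?_
    · intro b hb
      have hsign : ((Equiv.Perm.sign (b * τ) : ℤ) : ℂ) =
          -((Equiv.Perm.sign b : ℤ) : ℂ) := by
        rw [Equiv.Perm.sign_mul, Equiv.Perm.sign_swap hjk]
        push_cast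
        ring
      have hind : (if e = x ∘ (b * τ) then (1 : ℂ) else 0) =
          (if e = x ∘ b then (1 : ℂ) else 0) := by
        have hiff : (e = x ∘ ⇑(b * τ)) ↔ (e = x ∘ ⇑b) := by
          have hcoe : ((b * τ : Equiv.Perm (Fin n)) : Fin n → Fin n) =
              (b : Fin n → Fin n) ∘ τ := rfl
          rw [hcoe]
          constructor
          · intro h
            funext y
            have h1 := congrFun h (τ y)
            have h2 := congrFun heτ y
            simp only [Function.comp_apply] at h1 h2 ⊢
            rw [hτ, Equiv.swap_apply_self] at h1
            rw [h2] at h1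
            exact h1
          · intro h
            funext y
            have h1 := congrFun h (τ y)
            have h2 := congrFun heτ y
            simp only [Function.comp_apply] at h1 h2 ⊢
            rw [h2] at h1
            exact h1
        simp only [hiff]
      rw [hsign, hind]
      ring
    · intro b hb hne
      intro habs
      have : τ = 1 := by
        have := congrArg (fun g => b⁻¹ * g) habs
        simpa [mul_assoc] using this
      have : τ j = j := by rw [this]; rfl
      rw [hτ, Equiv.swap_apply_left] at this
      exact hjk this.symm
    · intro b hb
      simp only [colStab, Finset.mem_filter, Finset.mem_univ, true_and] at hb ⊢
      intro y
      have : (b * τ) y = b (τ y) := rfl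
      rw [this, hb (τ y), hτcol y]
    · intro b hb
      show b * τ * τ = b
      rw [mul_assoc, hτ, Equiv.swap_mul_self, mul_one]
  unfold youngSym
  rw [← Matrix.mulVec_mulVec, hC, Matrix.mulVec_zero]
end
end

section
/- Let λ ⊢ n and suppose π ∈ S_n strictly dominates σ ∈ S_n in the order <_λ on standard tableaux (meaning: letting T_π, T_σ be the tableaux obtained by the action of π, σ on the canonical standard tableau of shape λ, there is an i appearing in a strictly higher row of T_π than of T_σ while every j > i lies in the same row in both). Let |(λ)⟩ be the standard basis vector of (ℂ^d)^⊗n whose corresponding tableau has all entries of row i equal to i. Then ⟨(λ)| P_π† P_σ |(λ)⟩ = 0. -/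
open Matrix
open scoped Kronecker ENNReal

noncomputable section

/-- If `π` strictly dominates `σ` in the order `<_λ` (some number `i` lies in a strictly
higher row of `T_π` than of `T_σ`, while every `j > i` lies in the same row in both), and
`|(λ)⟩` is the standard basis vector whose `i`-th row entries all equal `i`, then
`⟨(λ)| P_π† P_σ |(λ)⟩ = 0`. -/
theorem tableau_order_orthogonality (d n k : ℕ) (hkd : k ≤ d) (lam : ℕ → ℕ)
    (hanti : Antitone lam) (hpos : ∀ i < k, 0 < lam i) (hzero : ∀ i, k ≤ i → lam i = 0)
    (hsum : rowSum lam k = n)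
    (e : Fin n → Fin d) (he : ∀ j : Fin n, (e j : ℕ) = rowOf lam (j : ℕ))
    (π σ : Equiv.Perm (Fin n))
    (hdom : ∃ i : Fin n,
      rowOf lam ((π.symm i : Fin n) : ℕ) < rowOf lam ((σ.symm i : Fin n) : ℕ) ∧
      ∀ j : Fin n, (i : ℕ) < (j : ℕ) →
        rowOf lam ((π.symm j : Fin n) : ℕ) = rowOf lam ((σ.symm j : Fin n) : ℕ)) :
    star ((permOp d n π).mulVec (Pi.single e 1)) ⬝ᵥ
      (permOp d n σ).mulVec (Pi.single e 1) = 0 := by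
  obtain ⟨i, hlt, _⟩ := hdom
  have hne : e (π.symm i) ≠ e (σ.symm i) := by
    intro h
    have := congrArg Fin.val h
    rw [he, he] at this
    omega
  have hsingle : ∀ (τ : Equiv.Perm (Fin n)) (x : Fin n → Fin d),
      (permOp d n τ).mulVec (Pi.single e 1) x = if e = x ∘ τ then 1 else 0 := by
    intro τ x
    simp only [Matrix.mulVec, dotProduct, permOp, Matrix.of_apply, ite_mul, one_mul,
      zero_mul, Finset.sum_ite_eq', Finset.mem_univ, if_true]
    by_cases h : e = x ∘ τ
    · simp [← h, Pi.single_apply]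
    · simp [Pi.single_apply, Ne.symm h, h]
  simp only [dotProduct, Pi.star_apply, hsingle]
  apply Finset.sum_eq_zero
  intro x _
  by_cases h1 : e = x ∘ π
  · by_cases h2 : e = x ∘ σ
    · exfalso
      apply hne
      have : e (π.symm i) = x i := by rw [h1]; simp
      rw [this, h2]; simp
    · simp [h2]
  · simp [h1]
end
end
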